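/- For every compact set E ⊆ {t ∈ ℂ : |1 − Rt| < 1}, there exist positive constants m and M such that for every integer n ≥ 1, every t ∈ E, and every real s with 0 ≤ s ≤ n: | exp(−(1/μ − μ)·t·s) − μ^{−n}·λ(ts/n)ⁿ | ≤ M·s²·e^{−ms}/n. (Here ts/n lies in the closed disk {|w − 1/R| ≤ 1/R}, on which λ is defined.) -/

import Mathlib

open Complex Set Filter MeasureTheory

/-- `μ = (R - √(R²-4))/2`. -/
noncomputable def mu (R : ℝ) : ℝ := (R - Real.sqrt (R ^ 2 - 4)) / 2

/-- The Möbius transformation `λ(z) = (z - μ)/(μz - 1)`. -/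
noncomputable def lam (R : ℝ) (z : ℂ) : ℂ := (z - (mu R : ℂ)) / ((mu R : ℂ) * z - 1)

/-- The shifted Zhukovsky-type map `ψ(w) = Rw - 1 + 1/(Rw - 1)`. -/
noncomputable def psi (R : ℝ) (w : ℂ) : ℂ := (R : ℂ) * w - 1 + ((R : ℂ) * w - 1)⁻¹

/-- `χ(t) = t ∑_{k ∈ ℤ} μ^{4k} exp((μ - 1/μ) μ^{4k} t)`. -/
noncomputable def chi (R : ℝ) (t : ℂ) : ℂ :=
  t * ∑' k : ℤ, (mu R : ℂ) ^ (4 * k) *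
    Complex.exp (((mu R : ℂ) - (mu R : ℂ)⁻¹) * (mu R : ℂ) ^ (4 * k) * t)

/-- The region `D = {t : |t - 1/R| < 1/R, Re t > Rμ²/2}`. -/
def Dset (R : ℝ) : Set ℂ :=
  {t | ‖t - 1 / (R : ℂ)‖ < 1 / R ∧ R * (mu R) ^ 2 / 2 < t.re}

/-- The region `𝔇 = {w : |w - R/(R²-1)| > 1/(R²-1), |w| < 1}`. -/
def frakD (R : ℝ) : Set ℂ :=
  {w | 1 / (R ^ 2 - 1) < ‖w - (R : ℂ) / (((R : ℝ) ^ 2 - 1 : ℝ) : ℂ)‖ ∧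
    ‖w‖ < 1}

/-- The orthogonality domain `G₁ = ψ(𝔇)`. -/
noncomputable def G1 (R : ℝ) : Set ℂ := psi R '' frakD R

/-- `p` is the sequence of Carleman (Bergman) orthonormal polynomials of `G₁`:
`p n` has degree `n`, real positive leading coefficient, and
`(1/π) ∫_{G₁} pₙ conj(pₘ) dA = δ_{n,m}`. -/
def IsCarleman (R : ℝ) (p : ℕ → Polynomial ℂ) : Prop :=
  (∀ n, (p n).natDegree = n) ∧
  (∀ n, 0 < (p n).leadingCoeff.re ∧ (p n).leadingCoeff.im = 0) ∧
  (∀ n m, ∫ z in G1 R, (p n).eval z * (starRingEnd ℂ) ((p m).eval z) =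
      if n = m then (Real.pi : ℂ) else 0)

/-- The limit functions `f_q` of Theorem 1.1. -/
noncomputable def fq (R q : ℝ) (t : ℂ) : ℂ :=
  (1 - (mu R : ℂ) * t) ^ 2 * (1 - (mu R : ℂ) ^ 3 / t) ^ 2 / ((1 - (mu R : ℂ) ^ 4) * R) *
    ((chi R ((((mu R) ^ (4 * q) : ℝ) : ℂ) * t) -
        chi R ((((mu R) ^ (4 * q + 2) : ℝ) : ℂ) / t)) /
      (t - (mu R : ℂ) ^ 2 / t))

/-- `Gₙ(t) = μ^{-n} λ(t)ⁿ λ'(t)`. -/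
noncomputable def Gfun (R : ℝ) (n : ℕ) (t : ℂ) : ℂ :=
  ((mu R : ℂ) ^ n)⁻¹ * (lam R t) ^ n * deriv (lam R) t

/-! With `a = μ⁻¹ - μ`, `u = s/n ∈ [0, 1]` and `z = t u`, the two terms are `vⁿ` and `wⁿ` for
`v = exp(-a z)` and `w = λ(z)/μ`. Since `λ(z)/μ = 1 - a z - (1 - μ²) z² / (1 - μ z)`, the two
agree to second order at `0`, so `‖v - w‖ ≤ C u²`. Both are also at most `e^{-m u}`:
`‖v‖ = exp(-a Re z)` with `R Re z ≥ 1 - ‖1 - R z‖`, and the identity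
`R (μ² ‖μ z - 1‖² - ‖z - μ‖²) = μ (1 - μ²) (1 - ‖1 - R z‖²)` bounds `1 - ‖w‖²` below by a multiple
of `1 - ‖1 - R z‖`. By compactness `‖1 - R t‖ ≤ 1 - δ` on `E`, hence `‖1 - R z‖ ≤ 1 - u δ`.
Finally `‖vⁿ - wⁿ‖ ≤ n e^{-m u (n - 1)} ‖v - w‖`. -/

lemma mu_pos {R : ℝ} (hR : 0 < R) : 0 < mu R := by
  have : Real.sqrt (R ^ 2 - 4) < R := (Real.sqrt_lt' hR).2 (by linarith)
  unfold mu; linarith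

lemma mu_lt_one {R : ℝ} (hR : 2 < R) : mu R < 1 := by
  have : R - 2 < Real.sqrt (R ^ 2 - 4) := (Real.lt_sqrt (by linarith)).2 (by nlinarith)
  unfold mu; linarith

lemma mu_sq_add_one {R : ℝ} (hR : 2 ≤ R) : mu R ^ 2 + 1 = R * mu R := by
  have := Real.sq_sqrt (show 0 ≤ R ^ 2 - 4 by nlinarith)
  unfold mu; linear_combination this / 4

section Mobius

variable {R μ : ℝ} {z : ℂ}

lemma mobius_div_eq (hμ : μ ≠ 0) (hz : (μ : ℂ) * z ≠ 1) :
    (z - μ) / (μ * z - 1) / μ =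
      1 - ((μ⁻¹ - μ : ℝ) : ℂ) * z - (1 - (μ : ℂ) ^ 2) * z ^ 2 / (1 - μ * z) := by
  have h1 : (μ : ℂ) * z - 1 ≠ 0 := sub_ne_zero.2 hz
  have h2 : 1 - (μ : ℂ) * z ≠ 0 := sub_ne_zero.2 (Ne.symm hz)
  have h3 : (μ : ℂ) ≠ 0 := by exact_mod_cast hμ
  rw [div_div, eq_sub_iff_add_eq, div_add_div _ _ (mul_ne_zero h1 h3) h2,
    div_eq_iff (mul_ne_zero (mul_ne_zero h1 h3) h2)]
  push_cast
  field_simp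
  ring

lemma sq_norm_sub_eq (hμ : μ ^ 2 + 1 = R * μ) :
    R * ‖z - μ‖ ^ 2 = R * μ ^ 2 * ‖μ * z - 1‖ ^ 2 - μ * (1 - μ ^ 2) * (1 - ‖1 - R * z‖ ^ 2) := by
  simp only [Complex.sq_norm, Complex.normSq_apply, Complex.sub_re, Complex.sub_im,
    Complex.mul_re, Complex.mul_im, Complex.ofReal_re, Complex.ofReal_im, Complex.one_re,
    Complex.one_im]
  linear_combination R * (z.re ^ 2 + z.im ^ 2) * (1 - μ ^ 2) * hμ

lemma norm_le_of_norm_one_sub_mul_le_one (hR : 0 < R) (h : ‖1 - R * z‖ ≤ 1) : ‖z‖ ≤ 2 / R := by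
  have : R * ‖z‖ ≤ 1 + ‖1 - R * z‖ := by
    simpa [norm_mul, abs_of_pos hR] using norm_sub_le (1 : ℂ) (1 - R * z)
  rw [le_div_iff₀ hR]; linarith

lemma div_le_re_of_norm_one_sub_mul_le {ε : ℝ} (hR : 0 < R) (h : ‖1 - R * z‖ ≤ 1 - ε) :
    ε / R ≤ z.re := by
  have : (1 - R * z).re ≤ ‖1 - R * z‖ := Complex.re_le_norm _
  simp only [Complex.sub_re, Complex.one_re, Complex.re_ofReal_mul] at this
  rw [div_le_iff₀ hR]; linarith

lemma norm_one_sub_mul_mul_ofReal_le {δ u : ℝ} (h : ‖1 - R * z‖ ≤ 1 - δ) (hu0 : 0 ≤ u)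
    (hu1 : u ≤ 1) : ‖1 - R * (z * u)‖ ≤ 1 - u * δ := by
  calc ‖1 - R * (z * u)‖ = ‖((1 - u : ℝ) : ℂ) + u * (1 - R * z)‖ := by push_cast; ring_nf
    _ ≤ (1 - u) + u * (1 - δ) := by
      refine (norm_add_le _ _).trans (add_le_add ?_ ?_)
      · rw [Complex.norm_real, Real.norm_of_nonneg (sub_nonneg.2 hu1)]
      rw [norm_mul, Complex.norm_real, Real.norm_of_nonneg hu0]
      exact mul_le_mul_of_nonneg_left h hu0
    _ = 1 - u * δ := by ring

lemma norm_exp_neg_mul_le {a ε : ℝ} (hR : 0 < R) (ha : 0 ≤ a) (h : ‖1 - R * z‖ ≤ 1 - ε) :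
    ‖Complex.exp (-(a * z))‖ ≤ Real.exp (-(a / R * ε)) := by
  rw [Complex.norm_exp, Real.exp_le_exp]
  have := mul_le_mul_of_nonneg_left (div_le_re_of_norm_one_sub_mul_le hR h) ha
  simp only [Complex.neg_re, Complex.re_ofReal_mul]
  linarith [mul_div_right_comm a ε R, mul_div_assoc a ε R]

lemma norm_mobius_div_le {ε : ℝ} (hμ0 : 0 < μ) (hμ1 : μ < 1) (hμ : μ ^ 2 + 1 = R * μ)
    (hε : 0 ≤ ε) (h : ‖1 - R * z‖ ≤ 1 - ε) :
    ‖(z - μ) / (μ * z - 1) / μ‖ ≤ Real.exp (-((1 - μ ^ 2) / (8 * R * μ) * ε)) := by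
  rcases eq_or_ne ((μ : ℂ) * z - 1) 0 with hD | hD
  · simp only [hD, div_zero, zero_div, norm_zero]; positivity
  have hR : 0 < R := pos_of_mul_pos_left (hμ ▸ by positivity) hμ0.le
  have hz := norm_le_of_norm_one_sub_mul_le_one hR (h.trans (by linarith))
  have hD2 : ‖(μ : ℂ) * z - 1‖ ^ 2 ≤ 4 := by
    have : ‖(μ : ℂ) * z - 1‖ ≤ μ * ‖z‖ + 1 := by
      simpa [norm_mul, abs_of_pos hμ0] using norm_sub_le ((μ : ℂ) * z) 1
    have : μ * ‖z‖ ≤ 1 := by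
      calc μ * ‖z‖ ≤ μ * (2 / R) := by gcongr
        _ ≤ 1 := by rw [mul_div_assoc', div_le_one hR]; nlinarith
    nlinarith [norm_nonneg ((μ : ℂ) * z - 1)]
  have hx : ε ≤ 1 - ‖1 - R * z‖ ^ 2 := by nlinarith [norm_nonneg (1 - R * z)]
  have hsq : ‖(z - μ) / (μ * z - 1) / μ‖ ^ 2 ≤ 1 - (1 - μ ^ 2) / (4 * R * μ) * ε := by
    rw [norm_div, norm_div, Complex.norm_real, Real.norm_of_nonneg hμ0.le, div_div, div_pow,
      div_le_iff₀ (by positivity)]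
    refine le_of_mul_le_mul_left ?_ hR
    have hc : R * ((1 - (1 - μ ^ 2) / (4 * R * μ) * ε) * (‖(μ : ℂ) * z - 1‖ * μ) ^ 2) =
        R * μ ^ 2 * ‖(μ : ℂ) * z - 1‖ ^ 2 - μ * (1 - μ ^ 2) * ε * ‖(μ : ℂ) * z - 1‖ ^ 2 / 4 := by
      field_simp
    have hμ2 : 0 ≤ μ * (1 - μ ^ 2) := mul_nonneg hμ0.le (by nlinarith)
    rw [sq_norm_sub_eq hμ, hc]
    linarith [mul_le_mul_of_nonneg_left hx hμ2,
      mul_le_mul_of_nonneg_left hD2 (mul_nonneg hμ2 hε)]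
  rw [← pow_le_pow_iff_left₀ (norm_nonneg _) (Real.exp_nonneg _) two_ne_zero, ← Real.exp_nat_mul]
  refine hsq.trans (le_of_le_of_eq (Real.one_sub_le_exp_neg _) ?_)
  congr 1; field_simp; ring

lemma norm_exp_sub_mobius_div_le (hμ0 : 0 < μ) (hμ1 : μ < 1) (hμ : μ ^ 2 + 1 = R * μ)
    (h : ‖1 - R * z‖ ≤ 1) :
    ‖Complex.exp (-((μ⁻¹ - μ : ℝ) * z)) - (z - μ) / (μ * z - 1) / μ‖ ≤
      ((μ⁻¹ - μ) ^ 2 * Real.exp 2 + R * μ) * ‖z‖ ^ 2 := by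
  have hR : 0 < R := pos_of_mul_pos_left (hμ ▸ by positivity) hμ0.le
  have hz := norm_le_of_norm_one_sub_mul_le_one hR h
  set a := μ⁻¹ - μ with ha_def
  have ha : a = R - 2 * μ := by
    rw [ha_def, inv_eq_of_mul_eq_one_right (b := R - μ) (by linear_combination -hμ)]; ring
  have ha0 : 0 < a := by nlinarith
  have h1μ : 0 ≤ 1 - μ ^ 2 := by nlinarith
  have hden : a / R ≤ ‖1 - (μ : ℂ) * z‖ := by
    have : 1 - μ * ‖z‖ ≤ ‖1 - (μ : ℂ) * z‖ := by
      simpa [norm_mul, abs_of_pos hμ0] using norm_sub_norm_le (1 : ℂ) (μ * z)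
    have : μ * ‖z‖ ≤ μ * (2 / R) := by gcongr
    rw [ha, sub_div, div_self hR.ne']
    linarith [show μ * (2 / R) = 2 * μ / R by ring]
  have hz' : (μ : ℂ) * z ≠ 1 := fun h1 => by
    rw [h1, sub_self, norm_zero] at hden; exact absurd hden (not_le.2 (by positivity))
  have hexp : ‖Complex.exp (-(a * z)) - 1 - (-(a * z))‖ ≤ a ^ 2 * Real.exp 2 * ‖z‖ ^ 2 := by
    have hx : ‖-((a : ℂ) * z)‖ = a * ‖z‖ := by
      rw [norm_neg, norm_mul, Complex.norm_real, Real.norm_of_nonneg ha0.le]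
    have hx2 : a * ‖z‖ ≤ 2 := by
      calc a * ‖z‖ ≤ R * (2 / R) := by gcongr; linarith
        _ = 2 := by field_simp
    have := Complex.norm_exp_sub_sum_le_norm_mul_exp (-(a * z)) 2
    simp only [Finset.sum_range_succ, Finset.sum_range_zero, pow_zero, pow_one,
      Nat.factorial_zero, Nat.factorial_one, Nat.cast_one, div_one, zero_add, hx] at this
    calc _ ≤ (a * ‖z‖) ^ 2 * Real.exp (a * ‖z‖) := by rwa [sub_sub]
      _ ≤ (a * ‖z‖) ^ 2 * Real.exp 2 := by gcongr
      _ = _ := by ring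
  have hfrac : ‖(1 - (μ : ℂ) ^ 2) * z ^ 2 / (1 - μ * z)‖ ≤ R * μ * ‖z‖ ^ 2 := by
    rw [norm_div, norm_mul, norm_pow,
      show (1 : ℂ) - μ ^ 2 = ((1 - μ ^ 2 : ℝ) : ℂ) by push_cast; rfl, Complex.norm_real, Real.norm_of_nonneg h1μ]
    calc (1 - μ ^ 2) * ‖z‖ ^ 2 / ‖1 - (μ : ℂ) * z‖ ≤ (1 - μ ^ 2) * ‖z‖ ^ 2 / (a / R) := by
          gcongr
      _ = R * μ * ‖z‖ ^ 2 := by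
          rw [div_div_eq_mul_div, div_eq_iff ha0.ne', ha]; linear_combination R * ‖z‖ ^ 2 * hμ
  rw [mobius_div_eq hμ0.ne' hz', ← ha_def]
  calc _ = ‖(Complex.exp (-(a * z)) - 1 - (-(a * z))) +
        (1 - (μ : ℂ) ^ 2) * z ^ 2 / (1 - μ * z)‖ := by ring_nf
    _ ≤ _ := (norm_add_le _ _).trans (add_le_add hexp hfrac)
    _ = _ := by ring

end Mobius

section PowSub

variable {𝕜 : Type*} [SeminormedRing 𝕜] [NormOneClass 𝕜] {v w : 𝕜}

lemma norm_pow_succ_sub_pow_succ_le {B : ℝ} (hv : ‖v‖ ≤ B) (hw : ‖w‖ ≤ B) (n : ℕ) :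
    ‖v ^ (n + 1) - w ^ (n + 1)‖ ≤ (n + 1) * B ^ n * ‖v - w‖ := by
  have hB : 0 ≤ B := (norm_nonneg _).trans hv
  induction n with
  | zero => simp
  | succ k ih =>
    have hwk : ‖w ^ (k + 1)‖ ≤ B ^ (k + 1) :=
      (norm_pow_le w _).trans (pow_le_pow_left₀ (norm_nonneg _) hw _)
    calc ‖v ^ (k + 1 + 1) - w ^ (k + 1 + 1)‖
        = ‖v * (v ^ (k + 1) - w ^ (k + 1)) + (v - w) * w ^ (k + 1)‖ := by
          rw [pow_succ' v (k + 1), pow_succ' w (k + 1)]; noncomm_ring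
      _ ≤ B * ((k + 1) * B ^ k * ‖v - w‖) + ‖v - w‖ * B ^ (k + 1) :=
          (norm_add_le _ _).trans (add_le_add
            ((norm_mul_le _ _).trans (mul_le_mul hv ih (norm_nonneg _) hB))
            ((norm_mul_le _ _).trans (mul_le_mul_of_nonneg_left hwk (norm_nonneg _))))
      _ = _ := by push_cast; ring

lemma norm_pow_sub_pow_le_of_norm_le_exp {m K s : ℝ} {n : ℕ} (hn : 1 ≤ n) (hm : 0 ≤ m)
    (hs : s ≤ n) (hv : ‖v‖ ≤ Real.exp (-m * (s / n))) (hw : ‖w‖ ≤ Real.exp (-m * (s / n)))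
    (hvw : ‖v - w‖ ≤ K * (s / n) ^ 2) :
    ‖v ^ n - w ^ n‖ ≤ K * Real.exp m * s ^ 2 * Real.exp (-m * s) / n := by
  obtain ⟨k, rfl⟩ : ∃ k, n = k + 1 := ⟨n - 1, by omega⟩
  push_cast at hs hv hw hvw ⊢
  have hpow : Real.exp (-m * (s / (k + 1))) ^ k ≤ Real.exp m * Real.exp (-m * s) := by
    rw [← Real.exp_nat_mul, ← Real.exp_add, Real.exp_le_exp]
    have : m * (s / (k + 1)) ≤ m := mul_le_of_le_one_right hm (div_le_one_of_le₀ hs (by positivity))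
    have : (k : ℝ) * (-m * (s / (k + 1))) = -m * s + m * (s / (k + 1)) := by field_simp; ring
    linarith
  calc ‖v ^ (k + 1) - w ^ (k + 1)‖ ≤ (k + 1) * Real.exp (-m * (s / (k + 1))) ^ k * ‖v - w‖ :=
        norm_pow_succ_sub_pow_succ_le hv hw k
    _ ≤ (k + 1) * (Real.exp m * Real.exp (-m * s)) * (K * (s / (k + 1)) ^ 2) := by gcongr
    _ = _ := by field_simp

end PowSub

theorem exists_bound_of_norm_one_sub_mul_le {R δ : ℝ} (hR : 2 < R) (hδ : 0 < δ) :
    ∃ m > (0 : ℝ), ∃ M > (0 : ℝ), ∀ n : ℕ, 1 ≤ n → ∀ t : ℂ, ‖1 - (R : ℂ) * t‖ ≤ 1 - δ →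
      ∀ s : ℝ, 0 ≤ s → s ≤ n →
      ‖Complex.exp (-(((mu R)⁻¹ - mu R : ℝ) : ℂ) * t * (s : ℂ)) -
          ((mu R : ℂ) ^ n)⁻¹ * (lam R (t * (s : ℂ) / (n : ℂ))) ^ n‖ ≤
        M * s ^ 2 * Real.exp (-m * s) / n := by
  have hR0 : 0 < R := by linarith
  have hμ0 : 0 < mu R := mu_pos hR0
  have hμ1 : mu R < 1 := mu_lt_one hR
  have hμ : mu R ^ 2 + 1 = R * mu R := mu_sq_add_one hR.le
  set μ := mu R
  set a := μ⁻¹ - μ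
  set κ := (1 - μ ^ 2) / (8 * R * μ)
  have ha : 0 < a := sub_pos.2 (hμ1.trans ((one_lt_inv₀ hμ0).2 hμ1))
  have hκ : 0 < κ := div_pos (by nlinarith) (by positivity)
  set m := min (a / R) κ * δ
  set K := (a ^ 2 * Real.exp 2 + R * μ) * (2 / R) ^ 2
  refine ⟨m, by positivity, K * Real.exp m, by positivity, fun n hn t ht s hs0 hsn => ?_⟩
  have hn0 : (0 : ℝ) < n := by exact_mod_cast hn
  set u := s / n
  have hu0 : 0 ≤ u := by positivity
  have hu1 : u ≤ 1 := div_le_one_of_le₀ hsn hn0.le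
  set z := t * (u : ℂ)
  have hz : ‖1 - R * z‖ ≤ 1 - u * δ := norm_one_sub_mul_mul_ofReal_le ht hu0 hu1
  have huδ : 0 ≤ u * δ := by positivity
  have hv : ‖Complex.exp (-(a * z))‖ ≤ Real.exp (-m * u) := by
    refine (norm_exp_neg_mul_le hR0 ha.le hz).trans (Real.exp_le_exp.2 ?_)
    nlinarith [min_le_left (a / R) κ]
  have hw : ‖(z - μ) / (μ * z - 1) / μ‖ ≤ Real.exp (-m * u) := by
    refine (norm_mobius_div_le hμ0 hμ1 hμ huδ hz).trans (Real.exp_le_exp.2 ?_)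
    nlinarith [min_le_right (a / R) κ]
  have hvw : ‖Complex.exp (-(a * z)) - (z - μ) / (μ * z - 1) / μ‖ ≤ K * u ^ 2 := by
    have htz : ‖z‖ ≤ 2 / R * u := by
      rw [norm_mul, Complex.norm_real, Real.norm_of_nonneg hu0]
      gcongr
      exact norm_le_of_norm_one_sub_mul_le_one hR0 (ht.trans (by linarith))
    refine (norm_exp_sub_mobius_div_le hμ0 hμ1 hμ (hz.trans (by linarith))).trans ?_
    calc _ ≤ (a ^ 2 * Real.exp 2 + R * μ) * (2 / R * u) ^ 2 := by gcongr
      _ = K * u ^ 2 := by ring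
  have hexp : Complex.exp (-(a : ℂ) * t * s) = Complex.exp (-(a * z)) ^ n := by
    have : (n : ℂ) ≠ 0 := by exact_mod_cast hn0.ne'
    rw [← Complex.exp_nat_mul]; congr 1; simp only [z, u]; push_cast; field_simp
  have hlam : ((μ : ℂ) ^ n)⁻¹ * lam R (t * s / n) ^ n = ((z - μ) / (μ * z - 1) / μ) ^ n := by
    rw [div_pow, inv_mul_eq_div]; congr; simp only [z, u]; push_cast; ring
  rw [hexp, hlam]
  exact norm_pow_sub_pow_le_of_norm_le_exp hn (by positivity) hsn hv hw hvw

/-- Lemma 3.1: for every compact `E ⊆ {|1 - Rt| < 1}` there are `m, M > 0` such that for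
`n ≥ 1`, `t ∈ E`, `0 ≤ s ≤ n`:
`|exp(-(1/μ - μ)ts) - μ^{-n} λ(ts/n)ⁿ| ≤ M s² e^{-ms}/n`. -/
theorem stmt_12 (R : ℝ) (hR : 2 < R) (E : Set ℂ)
    (hE : E ⊆ {t : ℂ | ‖1 - (R : ℂ) * t‖ < 1}) (hEc : IsCompact E) :
    ∃ m > (0 : ℝ), ∃ M > (0 : ℝ), ∀ n : ℕ, 1 ≤ n → ∀ t ∈ E, ∀ s : ℝ, 0 ≤ s → s ≤ n →
      ‖Complex.exp (-(((mu R)⁻¹ - mu R : ℝ) : ℂ) * t * (s : ℂ)) -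
          ((mu R : ℂ) ^ n)⁻¹ * (lam R (t * (s : ℂ) / (n : ℂ))) ^ n‖ ≤
        M * s ^ 2 * Real.exp (-m * s) / n := by
  obtain ⟨δ, hδ, hδE⟩ := hEc.exists_forall_le' (f := fun t => 1 - ‖1 - (R : ℂ) * t‖)
    (by fun_prop) (fun t ht => sub_pos.2 (hE ht))
  obtain ⟨m, hm, M, hM, hbound⟩ := exists_bound_of_norm_one_sub_mul_le hR hδ
  exact ⟨m, hm, M, hM, fun n hn t ht => hbound n hn t (by linarith [hδE t ht])⟩
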